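/- arXiv:2405.04945 — 10 statements merged into one kernel-verified Lean document; each statement's English description precedes it below -/
import Mathlib

section
/- A map R : X × X → X × X is a pentagon map if and only if T := R ∘ τ satisfies the braid-pentagon equation T₁₂ ∘ T₂₃ ∘ T₁₂ = T₂₃ ∘ τ₁₂ ∘ T₂₃, where τ : X × X → X × X is the transposition (x,y) ↦ (y,x). -/
/-- The map acting as `R` on factors 1,2 of `X × X × X` and as identity on factor 3. -/
def map12 {X : Type*} (R : X × X → X × X) : X × X × X → X × X × X :=
  fun p => ((R (p.1, p.2.1)).1, (R (p.1, p.2.1)).2, p.2.2)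

/-- The map acting as `R` on factors 1,3 of `X × X × X` and as identity on factor 2. -/
def map13 {X : Type*} (R : X × X → X × X) : X × X × X → X × X × X :=
  fun p => ((R (p.1, p.2.2)).1, p.2.1, (R (p.1, p.2.2)).2)

/-- The map acting as `R` on factors 2,3 of `X × X × X` and as identity on factor 1. -/
def map23 {X : Type*} (R : X × X → X × X) : X × X × X → X × X × X :=
  fun p => (p.1, R (p.2.1, p.2.2))

/-- A map `R : X × X → X × X` is a pentagon map if `R₁₂ ∘ R₁₃ ∘ R₂₃ = R₂₃ ∘ R₁₂`. -/
def IsPentagonMap {X : Type*} (R : X × X → X × X) : Prop :=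
  map12 R ∘ map13 R ∘ map23 R = map23 R ∘ map12 R

theorem pentagon_iff_braid_pentagon {X : Type*} (R : X × X → X × X) :
    IsPentagonMap R ↔
      (map12 (R ∘ fun p => (p.2, p.1)) ∘ map23 (R ∘ fun p => (p.2, p.1)) ∘
          map12 (R ∘ fun p => (p.2, p.1)) =
        map23 (R ∘ fun p => (p.2, p.1)) ∘ map12 (fun p : X × X => (p.2, p.1)) ∘
          map23 (R ∘ fun p => (p.2, p.1))) := by
  constructor <;> intro h <;> funext ⟨x, y, z⟩ <;>
    simpa [IsPentagonMap, map12, map13, map23, Function.comp, Prod.ext_iff] using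
      congrFun h (z, y, x)
end

section
/- The map S_I : (x,y) ↦ (x/(x+y−xy), x+y−xy) on ℂ (away from singularities) satisfies the pentagon relations: u(x,y) = u(u(x, v(y,z)), u(y,z)), u(v(x,y), z) = v(u(x, v(y,z)), u(y,z)), and v(v(x,y), z) = v(x, v(y,z)), where u(x,y) = x/(x+y−xy) and v(x,y) = x+y−xy. -/
/-- The map `S_I : (x,y) ↦ (x/(x+y−xy), x+y−xy)` satisfies the three pentagon
functional equations wherever all denominators are nonzero. -/
theorem SI_pentagon_relations (u v : ℂ → ℂ → ℂ)
    (hu : ∀ x y, u x y = x / (x + y - x * y))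
    (hv : ∀ x y, v x y = x + y - x * y) :
    ∀ x y z : ℂ,
      x + y - x * y ≠ 0 →
      y + z - y * z ≠ 0 →
      x + v y z - x * v y z ≠ 0 →
      u x (v y z) + u y z - u x (v y z) * u y z ≠ 0 →
      v x y + z - v x y * z ≠ 0 →
      u x y = u (u x (v y z)) (u y z) ∧
      u (v x y) z = v (u x (v y z)) (u y z) ∧
      v (v x y) z = v x (v y z) := by
  intro x y z h1 h2 h3 h4 h5
  simp only [hu, hv] at *
  have hD : x / (x + (y + z - y * z) - x * (y + z - y * z)) + y / (y + z - y * z) -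
      x / (x + (y + z - y * z) - x * (y + z - y * z)) * (y / (y + z - y * z)) =
      (x + y - x * y) / (x + (y + z - y * z) - x * (y + z - y * z)) := by
    field_simp
    ring
  rw [hD]
  refine ⟨?_, ?_, ?_⟩
  · field_simp
  · have h5' : x + y - x * y + z - (x + y - x * y) * z =
        x + (y + z - y * z) - x * (y + z - y * z) := by ring
    rw [h5']
  · ring
end

section
/- For each δ ∈ {0,1}, the map S_II^δ : (x,y) ↦ (x, x+y−δxy) on ℂ satisfies the pentagon equation R₁₂ ∘ R₁₃ ∘ R₂₃ = R₂₃ ∘ R₁₂ on ℂ × ℂ × ℂ. -/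
theorem SII_pentagon (δ : ℂ) (hδ : δ = 0 ∨ δ = 1) :
    IsPentagonMap (fun p : ℂ × ℂ => (p.1, p.1 + p.2 - δ * p.1 * p.2)) := by
  funext p
  obtain ⟨x, y, z⟩ := p
  rcases hδ with h | h <;> subst h <;>
    simp only [map12, map13, map23, Function.comp_apply, Prod.mk.injEq] <;>
    exact ⟨trivial, trivial, by ring⟩
end

section
/- The only Möbius transformations κ of ℂℙ¹ satisfying κ(xy) = κ(x)·κ(y) for all x, y are κ(x) = x and κ(x) = 1/x. -/
/-- A quadratic vanishing away from two points has all coefficients zero. -/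
lemma quad_zero {a b c s t : ℂ}
    (h : ∀ x : ℂ, x ≠ s → x ≠ t → a * x ^ 2 + b * x + c = 0) :
    a = 0 ∧ b = 0 ∧ c = 0 := by
  have hall : ∀ x : ℂ, a * x ^ 2 + b * x + c = 0 := by
    have hp : (Polynomial.C a * Polynomial.X ^ 2 + Polynomial.C b * Polynomial.X
        + Polynomial.C c : Polynomial ℂ) = 0 := by
      apply Polynomial.eq_zero_of_infinite_isRoot
      apply Set.Infinite.mono (s := ({s, t} : Set ℂ)ᶜ)
      · intro x hx
        simp only [Set.mem_compl_iff, Set.mem_insert_iff, Set.mem_singleton_iff,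
          not_or] at hx
        simp [Polynomial.IsRoot, h x hx.1 hx.2]
      · exact Set.Finite.infinite_compl (by simp)
    intro x
    have := congrArg (Polynomial.eval x) hp
    simpa using this
  have h0 := hall 0
  have h1 := hall 1
  have h2 := hall (-1)
  refine ⟨by linear_combination h1 / 2 + h2 / 2 - h0,
    by linear_combination h1 / 2 - h2 / 2, by linear_combination h0⟩

/-- The only Möbius transformations `κ(x) = (αx+β)/(γx+δ)` satisfying
`κ(xy) = κ(x)κ(y)` wherever defined are `κ(x) = x` and `κ(x) = 1/x`. -/
theorem moebius_multiplicative (α β γ δ : ℂ) (hdet : α * δ - β * γ ≠ 0)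
    (hmul : ∀ x y : ℂ, γ * x + δ ≠ 0 → γ * y + δ ≠ 0 → γ * (x * y) + δ ≠ 0 →
      (α * (x * y) + β) / (γ * (x * y) + δ) =
        ((α * x + β) / (γ * x + δ)) * ((α * y + β) / (γ * y + δ))) :
    (∀ x : ℂ, (α * x + β) / (γ * x + δ) = x) ∨
    (∀ x : ℂ, (α * x + β) / (γ * x + δ) = 1 / x) := by
  have key : ∀ x y : ℂ, γ * x + δ ≠ 0 → γ * y + δ ≠ 0 → γ * (x * y) + δ ≠ 0 →
      (α * (x * y) + β) * (γ * x + δ) * (γ * y + δ)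
        - (α * x + β) * (α * y + β) * (γ * (x * y) + δ) = 0 := by
    intro x y h1 h2 h3
    have h := hmul x y h1 h2 h3
    rw [div_mul_div_comm, div_eq_div_iff h3 (mul_ne_zero h1 h2)] at h
    linear_combination h
  rcases eq_or_ne γ 0 with rfl | hγ
  · -- γ = 0 case: κ(x) = (αx+β)/δ, show it is x
    have hδ : δ ≠ 0 := by intro h; apply hdet; rw [h]; ring
    have hα : α ≠ 0 := by intro h; apply hdet; rw [h]; ring
    have e1 := key 0 0 (by simpa) (by simpa) (by simpa)
    have e2 := key 1 0 (by simpa) (by simpa) (by simpa)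
    have hβ : β = 0 := by
      have hab : α * β * δ = 0 := by linear_combination e1 - e2
      rcases mul_eq_zero.1 hab with h | h
      · rcases mul_eq_zero.1 h with h' | h'
        · exact absurd h' hα
        · exact h'
      · exact absurd h hδ
    have e3 := key 2 3 (by simpa) (by simpa) (by simpa)
    have hδα : δ = α := by
      have : 6 * α * (δ - α) * δ = 0 := by
        rw [hβ] at e3; linear_combination e3
      rcases mul_eq_zero.1 this with h | h
      · rcases mul_eq_zero.1 h with h' | h'
        · rcases mul_eq_zero.1 h' with h'' | h''
          · norm_num at h''
          · exact absurd h'' hα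
        · exact sub_eq_zero.1 h'
      · exact absurd h hδ
    left
    intro x
    rw [hβ, hδα]
    rw [div_eq_iff (by simpa using hα)]; ring
  · -- γ ≠ 0 case: show α = 0, δ = 0, β = γ
    -- For each good y, the cross identity is a quadratic in x vanishing
    -- away from two points.
    have coeffs : ∀ y : ℂ, y ≠ 0 → γ * y + δ ≠ 0 →
        (α * γ * (γ - α) * y ^ 2 + α * γ * (δ - β) * y = 0) ∧
        (α * γ * (δ - β) * y ^ 2 + (α * δ ^ 2 + β * γ ^ 2 - α ^ 2 * δ - β ^ 2 * γ) * y
          + β * δ * (γ - α) = 0) ∧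
        (β * δ * (γ - α) * y + β * δ * (δ - β) = 0) := by
      intro y hy h2
      have hq : ∀ x : ℂ, x ≠ -(δ / γ) → x ≠ -(δ / (γ * y)) →
          (α * γ * (γ - α) * y ^ 2 + α * γ * (δ - β) * y) * x ^ 2
          + (α * γ * (δ - β) * y ^ 2
              + (α * δ ^ 2 + β * γ ^ 2 - α ^ 2 * δ - β ^ 2 * γ) * y
              + β * δ * (γ - α)) * x
          + (β * δ * (γ - α) * y + β * δ * (δ - β)) = 0 := by
        intro x hxs hxt
        have hgy : γ * y ≠ 0 := mul_ne_zero hγ hy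
        have h1 : γ * x + δ ≠ 0 := by
          intro hc
          apply hxs
          field_simp [hγ]
          linear_combination hc
        have h3 : γ * (x * y) + δ ≠ 0 := by
          intro hc
          apply hxt
          field_simp [hgy]
          linear_combination hc
        have := key x y h1 h2 h3
        linear_combination this
      exact quad_zero hq
    -- Now apply quad_zero in y to each coefficient equation.
    have hA : ∀ y : ℂ, y ≠ 0 → y ≠ -(δ / γ) →
        α * γ * (γ - α) * y ^ 2 + α * γ * (δ - β) * y + 0 = 0 := by
      intro y hy hys
      have h2 : γ * y + δ ≠ 0 := by
        intro hc; apply hys; field_simp [hγ]; linear_combination hc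
      have := (coeffs y hy h2).1
      linear_combination this
    have hB : ∀ y : ℂ, y ≠ 0 → y ≠ -(δ / γ) →
        α * γ * (δ - β) * y ^ 2
          + (α * δ ^ 2 + β * γ ^ 2 - α ^ 2 * δ - β ^ 2 * γ) * y
          + β * δ * (γ - α) = 0 := by
      intro y hy hys
      have h2 : γ * y + δ ≠ 0 := by
        intro hc; apply hys; field_simp [hγ]; linear_combination hc
      exact (coeffs y hy h2).2.1
    have hC : ∀ y : ℂ, y ≠ 0 → y ≠ -(δ / γ) →
        (0 : ℂ) * y ^ 2 + β * δ * (γ - α) * y + β * δ * (δ - β) = 0 := by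
      intro y hy hys
      have h2 : γ * y + δ ≠ 0 := by
        intro hc; apply hys; field_simp [hγ]; linear_combination hc
      have := (coeffs y hy h2).2.2
      linear_combination this
    obtain ⟨eA1, eA2, -⟩ := quad_zero hA
    obtain ⟨-, eB2, eB3⟩ := quad_zero hB
    obtain ⟨-, -, eC3⟩ := quad_zero hC
    -- From eA1, eA2: α = 0 (otherwise γ = α and δ = β which kills the det)
    have hα : α = 0 := by
      by_contra hα
      have hga : γ - α = 0 := by
        rcases mul_eq_zero.1 eA1 with h | h
        · rcases mul_eq_zero.1 h with h' | h'
          · exact absurd h' hα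
          · exact absurd h' hγ
        · exact h
      have hdb : δ - β = 0 := by
        rcases mul_eq_zero.1 eA2 with h | h
        · rcases mul_eq_zero.1 h with h' | h'
          · exact absurd h' hα
          · exact absurd h' hγ
        · exact h
      apply hdet
      have h2 : δ = β := sub_eq_zero.1 hdb
      rw [h2, sub_eq_zero.1 hga]; ring
    have hβ : β ≠ 0 := by
      intro h; apply hdet; rw [h, hα]; ring
    have hβγ : β = γ := by
      have h : β * γ * (γ - β) = 0 := by
        rw [hα] at eB2; linear_combination eB2
      rcases mul_eq_zero.1 h with h' | h'
      · rcases mul_eq_zero.1 h' with h'' | h''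
        · exact absurd h'' hβ
        · exact absurd h'' hγ
      · exact (sub_eq_zero.1 h').symm
    have hδ : δ = 0 := by
      have h : β * δ * γ = 0 := by
        rw [hα] at eB3; linear_combination eB3
      rcases mul_eq_zero.1 h with h' | h'
      · rcases mul_eq_zero.1 h' with h'' | h''
        · exact absurd h'' hβ
        · exact h''
      · exact absurd h' hγ
    right
    intro x
    rw [hα, hδ, hβγ]
    rcases eq_or_ne x 0 with rfl | hx
    · simp
    · field_simp; ring
end

section
/- There is no bijection φ : ℂℙ¹ → ℂℙ¹ satisfying φ(x − y) = φ(x)/φ(y) for all x, y ∈ ℂ; hence the pentagon maps (x,y) ↦ (x−y, y) and (x,y) ↦ (x/y, y) are not Möb equivalent. -/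
open OnePoint

/-- Division on the Riemann sphere `ℂℙ¹ = ℂ ∪ {∞}` (with conventions `0/0 = 1`,
`∞/∞ = 1` at the two points where it is genuinely undefined). -/
noncomputable def pdiv : OnePoint ℂ → OnePoint ℂ → OnePoint ℂ
  | Option.none, Option.none => ((1 : ℂ) : OnePoint ℂ)
  | Option.none, Option.some _ => ∞
  | Option.some _, Option.none => ((0 : ℂ) : OnePoint ℂ)
  | Option.some a, Option.some b =>
      if b = 0 then (if a = 0 then ((1 : ℂ) : OnePoint ℂ) else ∞)
      else ((a / b : ℂ) : OnePoint ℂ)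

/-- Subtraction on the Riemann sphere (with the convention `∞ − ∞ = ∞` at the
point where it is genuinely undefined). -/
def psub : OnePoint ℂ → OnePoint ℂ → OnePoint ℂ
  | Option.none, _ => ∞
  | _, Option.none => ∞
  | Option.some a, Option.some b => ((a - b : ℂ) : OnePoint ℂ)

lemma pdiv_zero {a : OnePoint ℂ} (ha : a ≠ ((0:ℂ) : OnePoint ℂ)) :
    pdiv a ((0:ℂ) : OnePoint ℂ) = ∞ := by
  cases a with
  | infty => rfl
  | coe c =>
      have hc : c ≠ 0 := fun h => ha (by rw [h])
      show pdiv (Option.some c) (Option.some 0) = ∞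
      simp [pdiv, hc]

lemma pdiv_infty_coe (b : ℂ) : pdiv ∞ ((b:ℂ) : OnePoint ℂ) = ∞ := rfl

lemma psub_coe (a b : ℂ) : psub ((a:ℂ) : OnePoint ℂ) ((b:ℂ) : OnePoint ℂ) = ((a - b : ℂ) : OnePoint ℂ) := rfl

lemma main_aux : ¬ ∃ φ : OnePoint ℂ ≃ OnePoint ℂ,
    ∀ x y : ℂ, φ ((x - y : ℂ) : OnePoint ℂ) = pdiv (φ (x : OnePoint ℂ)) (φ (y : OnePoint ℂ)) := by
  rintro ⟨φ, h⟩
  -- no finite point maps to 0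
  have hA : ∀ y : ℂ, φ (y : OnePoint ℂ) ≠ ((0:ℂ) : OnePoint ℂ) := by
    intro y hy
    have ne1 : φ (((y+1 : ℂ)) : OnePoint ℂ) ≠ ((0:ℂ) : OnePoint ℂ) := by
      rw [← hy]
      intro he
      have := φ.injective he
      have : (y+1 : ℂ) = y := by exact_mod_cast this
      simp at this
    have ne2 : φ (((y+2 : ℂ)) : OnePoint ℂ) ≠ ((0:ℂ) : OnePoint ℂ) := by
      rw [← hy]
      intro he
      have := φ.injective he
      have : (y+2 : ℂ) = y := by exact_mod_cast this
      simp at this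
    have h1 := h (y+1) y
    have h2 := h (y+2) y
    rw [hy, pdiv_zero ne1] at h1
    rw [hy, pdiv_zero ne2] at h2
    have := φ.injective (h1.trans h2.symm)
    have : ((y+1) - y : ℂ) = ((y+2) - y : ℂ) := by exact_mod_cast this
    simp at this
  -- no finite point maps to ∞
  have hB : ∀ x : ℂ, φ (x : OnePoint ℂ) ≠ ∞ := by
    intro x hx
    have ne1 : φ (((x+1 : ℂ)) : OnePoint ℂ) ≠ ∞ := by
      rw [← hx]
      intro he
      have := φ.injective he
      have : (x+1 : ℂ) = x := by exact_mod_cast this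
      simp at this
    obtain ⟨b1, hb1⟩ : ∃ b : ℂ, φ (((x+1 : ℂ)) : OnePoint ℂ) = (b : OnePoint ℂ) := by
      cases hc : φ (((x+1 : ℂ)) : OnePoint ℂ) with
      | infty => exact absurd hc ne1
      | coe b => exact ⟨b, rfl⟩
    have ne2 : φ (((x+2 : ℂ)) : OnePoint ℂ) ≠ ∞ := by
      rw [← hx]
      intro he
      have := φ.injective he
      have : (x+2 : ℂ) = x := by exact_mod_cast this
      simp at this
    obtain ⟨b2, hb2⟩ : ∃ b : ℂ, φ (((x+2 : ℂ)) : OnePoint ℂ) = (b : OnePoint ℂ) := by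
      cases hc : φ (((x+2 : ℂ)) : OnePoint ℂ) with
      | infty => exact absurd hc ne2
      | coe b => exact ⟨b, rfl⟩
    have h1 := h x (x+1)
    have h2 := h x (x+2)
    rw [hx, hb1, pdiv_infty_coe] at h1
    rw [hx, hb2, pdiv_infty_coe] at h2
    have := φ.injective (h1.trans h2.symm)
    have : (x - (x+1) : ℂ) = (x - (x+2) : ℂ) := by exact_mod_cast this
    simp at this
  -- φ.symm ∞ = ∞ and φ.symm 0 = ∞
  have hBi : φ.symm ∞ = ∞ := by
    cases hz : φ.symm ∞ with
    | infty => rfl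
    | coe x =>
        exact absurd (by rw [← hz, Equiv.apply_symm_apply]) (hB x)
  have hAi : φ.symm ((0:ℂ) : OnePoint ℂ) = ∞ := by
    cases hz : φ.symm ((0:ℂ) : OnePoint ℂ) with
    | infty => rfl
    | coe x =>
        exact absurd (by rw [← hz, Equiv.apply_symm_apply]) (hA x)
  have : (∞ : OnePoint ℂ) = ((0:ℂ) : OnePoint ℂ) := φ.symm.injective (hBi.trans hAi.symm)
  exact (OnePoint.infty_ne_coe (0:ℂ)) this


/-- There is no bijection `φ` of `ℂℙ¹` with `φ(x − y) = φ(x)/φ(y)` for all `x, y ∈ ℂ`;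
hence the pentagon maps `(x,y) ↦ (x−y, y)` and `(x,y) ↦ (x/y, y)` are not Möb
equivalent. -/
theorem no_bijection_sub_to_div :
    (¬ ∃ φ : OnePoint ℂ ≃ OnePoint ℂ,
        ∀ x y : ℂ, φ ((x - y : ℂ) : OnePoint ℂ) = pdiv (φ (x : OnePoint ℂ)) (φ (y : OnePoint ℂ))) ∧
    (¬ ∃ φ : OnePoint ℂ ≃ OnePoint ℂ,
        (fun p : OnePoint ℂ × OnePoint ℂ => (psub p.1 p.2, p.2)) ∘ Prod.map φ φ =
          Prod.map φ φ ∘ fun p : OnePoint ℂ × OnePoint ℂ => (pdiv p.1 p.2, p.2)) := by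
  refine ⟨main_aux, ?_⟩
  rintro ⟨φ, h⟩
  have key : ∀ a b : OnePoint ℂ, psub (φ a) (φ b) = φ (pdiv a b) := by
    intro a b
    have := congrFun h (a, b)
    simpa [Prod.ext_iff, Prod.map] using this
  refine main_aux ⟨φ.symm, fun u v => ?_⟩
  have := key (φ.symm (u : OnePoint ℂ)) (φ.symm (v : OnePoint ℂ))
  rw [Equiv.apply_symm_apply, Equiv.apply_symm_apply, psub_coe] at this
  rw [this, Equiv.symm_apply_apply]
end

section
/- For matrices A(x) = [[1−x, x],[0,1]] and B(x) = [[1,0],[1−x, x]] over a noncommutative ring, the refactorization equation A(u)·B(v) = B(y)·A(x) holds when u = x(x+y−yx)⁻¹ and v = x+y−yx (assuming x+y−yx invertible). -/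
/-- The refactorization `A(u)B(v) = B(y)A(x)` with `A(x) = [[1−x,x],[0,1]]`,
`B(x) = [[1,0],[1−x,x]]` holds for the non-abelian pentagon map
`𝔖_I : (x,y) ↦ (x(x+y−yx)⁻¹, x+y−yx)`. -/
theorem refactorization_SI {A : Type*} [Ring A] (x y w : A)
    (hw1 : (x + y - y * x) * w = 1) (hw2 : w * (x + y - y * x) = 1) :
    !![1 - x * w, x * w; 0, 1] * !![1, 0; 1 - (x + y - y * x), x + y - y * x] =
      !![1, 0; 1 - y, y] * !![1 - x, x; 0, 1] := by
  have h1 : x * w * (x + y - y * x) = x := by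
    rw [mul_assoc, hw2, mul_one]
  ext i j
  fin_cases i <;> fin_cases j <;>
    simp [Matrix.mul_apply, Fin.sum_univ_two, mul_sub, sub_mul, mul_add, add_mul, h1] <;>
    noncomm_ring
end

section
/- The map S_I : (x,y) ↦ (u,v) with u = x/(x+y−xy), v = x+y−xy satisfies the Poisson-preservation identity (∂u/∂x · ∂v/∂y − ∂u/∂y · ∂v/∂x) · x·y·(1−x)·(1−y) = u·v·(1−u)·(1−v) at all points where defined. -/
/-- The map `S_I` with `u = x/(x+y−xy)`, `v = x+y−xy` preserves the Poisson structure
`Ω = xy(1−x)(1−y) ∂ₓ ∧ ∂_y`: the Jacobian identity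
`(∂u/∂x ∂v/∂y − ∂u/∂y ∂v/∂x)·xy(1−x)(1−y) = uv(1−u)(1−v)` holds where defined. -/
theorem SI_preserves_poisson (u v : ℂ → ℂ → ℂ)
    (hu : ∀ x y, u x y = x / (x + y - x * y))
    (hv : ∀ x y, v x y = x + y - x * y)
    (x y : ℂ) (h : x + y - x * y ≠ 0) :
    (deriv (fun t => u t y) x * deriv (fun t => v x t) y -
        deriv (fun t => u x t) y * deriv (fun t => v t y) x) *
      (x * y * (1 - x) * (1 - y)) =
    u x y * v x y * (1 - u x y) * (1 - v x y) := by
  have hux : deriv (fun t => u t y) x =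
      (1 * (x + y - x * y) - x * (1 - y)) / (x + y - x * y) ^ 2 := by
    have h1 : HasDerivAt (fun t : ℂ => t) 1 x := hasDerivAt_id x
    have h2 : HasDerivAt (fun t : ℂ => t + y - t * y) (1 - y) x := by
      simpa [Pi.sub_def] using ((hasDerivAt_id x).add_const y).sub ((hasDerivAt_id x).mul_const y)
    have := (h1.div h2 h).deriv
    rw [show (fun t => u t y) = fun t : ℂ => t / (t + y - t * y) by
      funext t; exact hu t y]
    simpa [Pi.div_def] using this
  have huy : deriv (fun t => u x t) y =
      (0 * (x + y - x * y) - x * (1 - x)) / (x + y - x * y) ^ 2 := by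
    have h1 : HasDerivAt (fun _ : ℂ => x) 0 y := hasDerivAt_const y x
    have h2 : HasDerivAt (fun t : ℂ => x + t - x * t) (1 - x) y := by
      simpa [Pi.sub_def] using ((hasDerivAt_id y).const_add x).sub ((hasDerivAt_id y).const_mul x)
    have := (h1.div h2 h).deriv
    rw [show (fun t => u x t) = fun t : ℂ => x / (x + t - x * t) by
      funext t; exact hu x t]
    simpa [Pi.div_def] using this
  have hvx : deriv (fun t => v t y) x = 1 - y := by
    have h2 : HasDerivAt (fun t : ℂ => t + y - t * y) (1 - y) x := by
      simpa [Pi.sub_def] using ((hasDerivAt_id x).add_const y).sub ((hasDerivAt_id x).mul_const y)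
    rw [show (fun t => v t y) = fun t : ℂ => t + y - t * y by
      funext t; exact hv t y]
    exact h2.deriv
  have hvy : deriv (fun t => v x t) y = 1 - x := by
    have h2 : HasDerivAt (fun t : ℂ => x + t - x * t) (1 - x) y := by
      simpa [Pi.sub_def] using ((hasDerivAt_id y).const_add x).sub ((hasDerivAt_id y).const_mul x)
    rw [show (fun t => v x t) = fun t : ℂ => x + t - x * t by
      funext t; exact hv x t]
    exact h2.deriv
  rw [hux, huy, hvx, hvy, hu, hv]
  field_simp
  ring
end

section
/- Let R = R^(1) be a quadrirational pentagon map with components (u,v), companion map R^(3) : (u(x,y), y) ↦ (x, v(x,y)), and let R^(4) = (R^(3))⁻¹ and R^(2) = R⁻¹. Then the entwining pentagon equation R^(1)₁₂ ∘ R^(3)₁₃ ∘ R^(3)₂₃ = R^(3)₂₃ ∘ R^(1)₁₂ holds. -/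
/-- For a quadrirational pentagon map `R = R⁽¹⁾ = (u,v)` with companion map
`R⁽³⁾ : (u(x,y), y) ↦ (x, v(x,y))`, the entwining pentagon equation
`R⁽¹⁾₁₂ ∘ R⁽³⁾₁₃ ∘ R⁽³⁾₂₃ = R⁽³⁾₂₃ ∘ R⁽¹⁾₁₂` holds. -/
theorem entwining_pentagon_companion {X : Type*} (u v : X → X → X)
    (R : X × X → X × X) (hRdef : ∀ x y, R (x, y) = (u x y, v x y))
    (hRbij : Function.Bijective R)
    (hu : ∀ y, Function.Bijective fun x => u x y)
    (hv : ∀ x, Function.Bijective fun y => v x y)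
    (hpent : IsPentagonMap R)
    (S : X × X → X × X) (hS : ∀ x y, S (u x y, y) = (x, v x y)) :
    map12 R ∘ map13 S ∘ map23 S = map23 S ∘ map12 R := by
  funext p
  obtain ⟨a, b, c⟩ := p
  obtain ⟨x₂, hx₂⟩ := (hu c).2 b
  obtain ⟨x₃, hx₃⟩ := (hu (v x₂ c)).2 a
  simp only at hx₂ hx₃
  have hp := congrFun hpent (x₃, x₂, c)
  simp only [Function.comp_apply, map12, map13, map23, hRdef] at hp ⊢
  rw [← hx₂, ← hx₃, hS, hS]
  simp only [hRdef] at hp ⊢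
  simp only [Prod.mk.injEq] at hp
  rw [hp.1, hp.2.1, hS, hp.2.2]
end

section
/- Let R be a pentagon map with components (u,v) and suppose the partial inverse T : (x, v(x,y)) ↦ (u(x,y), y) exists (i.e. y ↦ v(x,y) is a bijection for each x). Then T₁₂ ∘ T₁₃ ∘ R₂₃ = R₂₃ ∘ T₁₂ on X³. -/
/-- If `R = (u,v)` is a pentagon map and the partial inverse
`T : (x, v(x,y)) ↦ (u(x,y), y)` exists, then `T₁₂ ∘ T₁₃ ∘ R₂₃ = R₂₃ ∘ T₁₂`. -/
theorem entwining_pentagon_partial_inverse {X : Type*} (u v : X → X → X)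
    (R : X × X → X × X) (hRdef : ∀ x y, R (x, y) = (u x y, v x y))
    (hv : ∀ x, Function.Bijective fun y => v x y)
    (heq1 : ∀ x y z, u x y = u (u x (v y z)) (u y z))
    (heq2 : ∀ x y z, u (v x y) z = v (u x (v y z)) (u y z))
    (heq3 : ∀ x y z, v (v x y) z = v x (v y z))
    (T : X × X → X × X) (hT : ∀ x y, T (x, v x y) = (u x y, y)) :
    map12 T ∘ map13 T ∘ map23 R = map23 R ∘ map12 T := by
  funext p
  obtain ⟨x, a, b⟩ := p
  obtain ⟨y, rfl⟩ := (hv x).2 a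
  simp only [Function.comp_apply, map12, map13, map23, hRdef, hT, heq3, heq2]
  rw [← heq1]
end

section
/- The map 𝔯 : (x,p;y,q) ↦ ((1+q)x/(1+qy+pqx(y−1)), p; y+px(y−1), q) on ℂ² × ℂ² (with spectral parameters p, q fixed on each factor) satisfies the parametric Yang–Baxter equation 𝔯₁₂ ∘ 𝔯₁₃ ∘ 𝔯₂₃ = 𝔯₂₃ ∘ 𝔯₁₃ ∘ 𝔯₁₂, wherever all expressions are defined. -/
/-- The denominator appearing in the Yang–Baxter map `𝔯`. -/
def YBd (p q x y : ℂ) : ℂ := 1 + q * y + p * q * x * (y - 1)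

/-- First dynamical component of `𝔯((x,p),(y,q)) = ((u,p),(v,q))`. -/
noncomputable def YBu (p q x y : ℂ) : ℂ := (1 + q) * x / YBd p q x y

/-- Second dynamical component of `𝔯((x,p),(y,q)) = ((u,p),(v,q))`. -/
def YBv (p q x y : ℂ) : ℂ := y + p * x * (y - 1)

set_option maxHeartbeats 1000000

/-- Auxiliary division identity used for the first Yang–Baxter component. -/
lemma YB_div_aux (a b c : ℂ) {d2 d3 d4 d5 : ℂ} (h : d2 * d3 = d4 * d5) :
    a * (b * c / d2) / d3 = b * (a * c / d4) / d5 := by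
  rw [mul_div_assoc', div_div, mul_div_assoc', div_div, h]; ring

/-- The parametric map `𝔯 : (x,p;y,q) ↦ ((1+q)x/(1+qy+pqx(y−1)), p; y+px(y−1), q)`
satisfies the Yang–Baxter equation `𝔯₁₂ ∘ 𝔯₁₃ ∘ 𝔯₂₃ = 𝔯₂₃ ∘ 𝔯₁₃ ∘ 𝔯₁₂` wherever
all denominators are nonzero.  The left-hand side applied to `((x,p),(y,q),(z,r))`
first acts by `𝔯₂₃` on `((y,q),(z,r))`, then `𝔯₁₃`, then `𝔯₁₂`; the right-hand
side acts by `𝔯₁₂`, then `𝔯₁₃`, then `𝔯₂₃`; the parameters `p,q,r` are unchanged. -/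
theorem yang_baxter_from_pentagon (x y z p q r : ℂ)
    (h1 : YBd q r y z ≠ 0)
    (h2 : YBd p r x (YBv q r y z) ≠ 0)
    (h3 : YBd p q (YBu p r x (YBv q r y z)) (YBu q r y z) ≠ 0)
    (h4 : YBd p q x y ≠ 0)
    (h5 : YBd p r (YBu p q x y) z ≠ 0)
    (h6 : YBd q r (YBv p q x y) (YBv p r (YBu p q x y) z) ≠ 0) :
    YBu p q (YBu p r x (YBv q r y z)) (YBu q r y z) =
        YBu p r (YBu p q x y) z ∧
    YBv p q (YBu p r x (YBv q r y z)) (YBu q r y z) =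
        YBu q r (YBv p q x y) (YBv p r (YBu p q x y) z) ∧
    YBv p r x (YBv q r y z) =
        YBv q r (YBv p q x y) (YBv p r (YBu p q x y) z) := by
  have hkey : YBd p r x (YBv q r y z) * YBd p q (YBu p r x (YBv q r y z)) (YBu q r y z)
      = YBd p q x y * YBd p r (YBu p q x y) z := by
    simp only [YBu, YBv, YBd] at *
    ring_nf at *
    field_simp
    ring
  have hP6 : YBd q r (YBv p q x y) (YBv p r (YBu p q x y) z) * YBd p q x y
      = YBd p q x y + r * (YBd p q x y * z + p * (1 + q) * x * (z - 1))
        + q * r * (YBv p q x y) * (YBd p q x y * z + p * (1 + q) * x * (z - 1) - YBd p q x y) := by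
    simp only [YBu, YBv, YBd] at *
    field_simp
  have hP6ne : YBd p q x y + r * (YBd p q x y * z + p * (1 + q) * x * (z - 1))
        + q * r * (YBv p q x y) * (YBd p q x y * z + p * (1 + q) * x * (z - 1) - YBd p q x y) ≠ 0 := by
    rw [← hP6]; exact mul_ne_zero h6 h4
  refine ⟨?_, ?_, ?_⟩
  · show (1 + q) * ((1 + r) * x / YBd p r x (YBv q r y z)) /
          YBd p q (YBu p r x (YBv q r y z)) (YBu q r y z)
        = (1 + r) * ((1 + q) * x / YBd p q x y) / YBd p r (YBu p q x y) z
    exact YB_div_aux _ _ _ hkey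
  · have hrhs : YBu q r (YBv p q x y) (YBv p r (YBu p q x y) z)
        = (1 + r) * (YBv p q x y) * YBd p q x y /
          (YBd p q x y + r * (YBd p q x y * z + p * (1 + q) * x * (z - 1))
          + q * r * (YBv p q x y) * (YBd p q x y * z + p * (1 + q) * x * (z - 1) - YBd p q x y)) := by
      rw [YBu, ← hP6, mul_div_mul_right _ _ h4]
    rw [hrhs]
    simp only [YBu, YBv, YBd] at *
    ring_nf at *
    field_simp
    ring
  · simp only [YBu, YBv, YBd] at *
    ring_nf at *
    field_simp
    ring
end
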